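/- Let A, B be Hermitian N×N complex matrices and β > 0. Then F_β(B) − F_β(A) = ∫₀¹ Tr( σ_β( (1−s)A + sB ) (B − A) ) ds, where the integrand is a real-valued continuous function of s ∈ [0,1]. -/

import Mathlib

open Matrix

/-- Partition function `Z_β(X) = Tr(e^{−βX})` (a real number, as the real part
of the trace; for Hermitian `X` the trace is real). -/
noncomputable def partitionZ {N : ℕ} (β : ℝ) (X : Matrix (Fin N) (Fin N) ℂ) : ℝ :=
  (Matrix.trace (NormedSpace.exp ((-β : ℂ) • X))).re

/-- Gibbs state `σ_β(X) = e^{−βX}/Z_β(X)`. -/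
noncomputable def gibbs {N : ℕ} (β : ℝ) (X : Matrix (Fin N) (Fin N) ℂ) :
    Matrix (Fin N) (Fin N) ℂ :=
  ((partitionZ β X : ℝ) : ℂ)⁻¹ • NormedSpace.exp ((-β : ℂ) • X)

/-- Free energy `F_β(X) = −β⁻¹ log Z_β(X)`. -/
noncomputable def freeEnergy {N : ℕ} (β : ℝ) (X : Matrix (Fin N) (Fin N) ℂ) : ℝ :=
  -β⁻¹ * Real.log (partitionZ β X)

/-!
Write `-β H(s) = X + s C` with `X = -β A` and `C = -β (B - A)`. Differentiating the exponential
series term by term, `d/ds Tr (X + s C)ⁿ = n Tr ((X + s C)ⁿ⁻¹ C)` by cyclicity of the trace, even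
though `X` and `C` need not commute; hence `d/ds Tr e^{X + s C} = Tr (e^{X + s C} C)`. Since
`Z_β(H(s)) > 0` (as `e^{-βH} = Y* Y` with `Y = e^{-βH/2}` invertible), the chain rule for `log`
turns this into `d/ds F_β(H(s)) = Tr (σ_β(H(s)) (B - A))`, and the fundamental theorem of
calculus gives the identity.
-/

open NormedSpace
open scoped Nat

theorem map_sum_pow_mul_pow_of_map_mul_comm {𝔸 E F : Type*} [Semiring 𝔸] [AddCommMonoid E]
    [FunLike F 𝔸 E] [AddMonoidHomClass F 𝔸 E] (τ : F) (hτ : ∀ a b, τ (a * b) = τ (b * a))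
    (a c : 𝔸) (n : ℕ) :
    τ (∑ i ∈ Finset.range n, a ^ (n.pred - i) * c * a ^ i) = n • τ (a ^ n.pred * c) := by
  rw [map_sum, Finset.sum_congr rfl fun i hi => ?_, Finset.sum_const, Finset.card_range]
  rw [hτ, ← mul_assoc, ← pow_add, Nat.add_sub_cancel' (Nat.le_pred_of_lt (Finset.mem_range.1 hi))]

theorem inv_factorial_succ_smul_nsmul {𝕂 E : Type*} [Field 𝕂] [CharZero 𝕂] [AddCommGroup E]
    [Module 𝕂 E] (n : ℕ) (v : E) : ((n + 1)! : 𝕂)⁻¹ • (n + 1) • v = (n ! : 𝕂)⁻¹ • v := by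
  rw [← Nat.cast_smul_eq_nsmul 𝕂, smul_smul, Nat.factorial_succ]
  congr 1
  push_cast
  field_simp

section TraceExp

variable {𝕂 𝔸 E : Type*} [RCLike 𝕂] [NormedRing 𝔸] [NormedAlgebra 𝕂 𝔸]
  [NormedAddCommGroup E] [NormedSpace 𝕂 E]

theorem norm_pow_mul_le (a c : 𝔸) (n : ℕ) : ‖a ^ n * c‖ ≤ ‖a‖ ^ n * ‖c‖ := by
  rcases n.eq_zero_or_pos with rfl | hn
  · simp
  · exact (norm_mul_le _ _).trans (by gcongr; exact norm_pow_le' a hn)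

theorem norm_map_pow_add_smul_mul_le (τ : 𝔸 →L[𝕂] E) (x c : 𝔸) {z w : 𝕂} (hw : ‖w - z‖ ≤ 1)
    (n : ℕ) : ‖τ ((x + w • c) ^ n * c)‖ ≤ ‖τ‖ * ((‖x + z • c‖ + ‖c‖) ^ n * ‖c‖) := by
  have hxw : ‖x + w • c‖ ≤ ‖x + z • c‖ + ‖c‖ := calc
    ‖x + w • c‖ = ‖(x + z • c) + (w - z) • c‖ := by rw [sub_smul]; abel_nf
    _ ≤ ‖x + z • c‖ + ‖w - z‖ * ‖c‖ := (norm_add_le _ _).trans (by rw [norm_smul])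
    _ ≤ ‖x + z • c‖ + ‖c‖ := by nlinarith [norm_nonneg c]
  exact (τ.le_opNorm _).trans (by gcongr; exact (norm_pow_mul_le _ _ _).trans (by gcongr))

theorem hasDerivAt_map_pow_add_smul (τ : 𝔸 →L[𝕂] E) (hτ : ∀ a b, τ (a * b) = τ (b * a))
    (x c : 𝔸) (n : ℕ) (w : 𝕂) :
    HasDerivAt (fun w : 𝕂 => τ ((x + w • c) ^ n)) (n • τ ((x + w • c) ^ n.pred * c)) w := by
  have hline : HasDerivAt (fun w : 𝕂 => x + w • c) c w := by
    simpa using ((hasDerivAt_id w).smul_const c).const_add x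
  rw [← map_sum_pow_mul_pow_of_map_mul_comm τ hτ]
  exact τ.hasFDerivAt.comp_hasDerivAt w (hline.fun_pow' n)

theorem hasSum_map_exp_mul [CompleteSpace 𝔸] (τ : 𝔸 →L[𝕂] E) (y c : 𝔸) :
    HasSum (fun n => (n ! : 𝕂)⁻¹ • τ (y ^ n * c)) (τ (exp y * c)) := by
  simpa [smul_mul_assoc] using
    (τ.comp ((ContinuousLinearMap.mul 𝕂 𝔸).flip c)).hasSum (exp_series_hasSum_exp' (𝕂 := 𝕂) y)

theorem hasDerivAt_map_exp_add_smul [CompleteSpace 𝔸] [CompleteSpace E] (τ : 𝔸 →L[𝕂] E)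
    (hτ : ∀ a b, τ (a * b) = τ (b * a)) (x c : 𝔸) (z : 𝕂) :
    HasDerivAt (fun w : 𝕂 => τ (exp (x + w • c))) (τ (exp (x + z • c) * c)) z := by
  set g : ℕ → 𝕂 → E := fun n w => (n ! : 𝕂)⁻¹ • τ ((x + w • c) ^ n)
  set g' : ℕ → 𝕂 → E := fun n w => (n ! : 𝕂)⁻¹ • n • τ ((x + w • c) ^ n.pred * c)
  set R := ‖x + z • c‖ + ‖c‖
  set u : ℕ → ℝ := fun n => ‖τ‖ * ‖c‖ * (R ^ n.pred / n.pred !)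
  have hg'_succ (n : ℕ) (w : 𝕂) : g' (n + 1) w = (n ! : 𝕂)⁻¹ • τ ((x + w • c) ^ n * c) :=
    inv_factorial_succ_smul_nsmul n _
  have hsum (w : 𝕂) : HasSum (fun n => g n w) (τ (exp (x + w • c))) := by
    simpa [g] using τ.hasSum (exp_series_hasSum_exp' (𝕂 := 𝕂) (x + w • c))
  have hsum' : HasSum (fun n => g' n z) (τ (exp (x + z • c) * c)) := by
    refine (hasSum_nat_add_iff' 1).mp ?_
    rw [Finset.sum_range_one, show g' 0 z = 0 by simp [g'], sub_zero]
    simpa only [hg'_succ] using hasSum_map_exp_mul τ (x + z • c) c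
  have hu : Summable u :=
    (summable_nat_add_iff 1).mp ((Real.summable_pow_div_factorial R).mul_left (‖τ‖ * ‖c‖))
  have hbound : ∀ n, ∀ w ∈ Metric.ball z 1, ‖g' n w‖ ≤ u n := by
    rintro (_ | n) w hw
    · simp only [g', zero_smul, smul_zero, norm_zero, u]
      positivity
    rw [hg'_succ, norm_smul, norm_inv, RCLike.norm_natCast]
    calc (n ! : ℝ)⁻¹ * ‖τ ((x + w • c) ^ n * c)‖
        ≤ (n ! : ℝ)⁻¹ * (‖τ‖ * (R ^ n * ‖c‖)) := by
          gcongr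
          exact norm_map_pow_add_smul_mul_le τ x c (mem_ball_iff_norm.1 hw).le n
      _ = u (n + 1) := by simp only [u, Nat.pred_succ]; ring
  have hderiv := hasDerivAt_tsum_of_isPreconnected (g := g) (g' := g') hu Metric.isOpen_ball
    (convex_ball z 1).isPreconnected
    (fun n w _ => (hasDerivAt_map_pow_add_smul τ hτ x c n w).const_smul (n ! : 𝕂)⁻¹)
    hbound (Metric.mem_ball_self one_pos) (hsum z).summable (Metric.mem_ball_self one_pos)
  rw [hsum'.tsum_eq] at hderiv
  simpa only [(hsum _).tsum_eq] using hderiv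

end TraceExp

namespace Matrix

variable {n : Type*} [Fintype n] [DecidableEq n]

section

attribute [local instance] Matrix.linftyOpNormedRing Matrix.linftyOpNormedAlgebra

theorem hasDerivAt_trace_exp_add_smul (X C : Matrix n n ℂ) (z : ℂ) :
    HasDerivAt (fun w : ℂ => trace (exp (X + w • C))) (trace (exp (X + z • C) * C)) z :=
  hasDerivAt_map_exp_add_smul (traceLinearMap n ℂ ℂ).toContinuousLinearMap
    (fun a b => trace_mul_comm a b) X C z

theorem continuous_exp : Continuous (exp : Matrix n n ℂ → Matrix n n ℂ) :=
  exp_continuous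

end

open scoped ComplexOrder in
theorem IsHermitian.trace_exp_pos [Nonempty n] {X : Matrix n n ℂ} (hX : X.IsHermitian) :
    0 < trace (NormedSpace.exp X) := by
  set Y := NormedSpace.exp ((2⁻¹ : ℝ) • X)
  have hY : Y.IsHermitian := (hX.smul (.all _)).exp
  have hXY : NormedSpace.exp X = Yᴴ * Y := by
    rw [hY.eq, ← exp_add_of_commute _ _ (Commute.refl _), ← add_smul]
    norm_num
  rw [hXY]
  exact (posSemidef_conjTranspose_mul_self Y).trace_nonneg.lt_of_ne'
    (trace_conjTranspose_mul_self_eq_zero_iff.not.2 (isUnit_exp _).ne_zero)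

end Matrix

section Thermodynamics

variable {N : ℕ}

theorem partitionZ_pos [NeZero N] (β : ℝ) {X : Matrix (Fin N) (Fin N) ℂ} (hX : X.IsHermitian) :
    0 < partitionZ β X := by
  have hβX : (((-β : ℝ) : ℂ) • X).IsHermitian := hX.smul (Complex.conj_ofReal _)
  push_cast at hβX
  exact (Complex.pos_iff.1 hβX.trace_exp_pos).1

theorem continuous_partitionZ (β : ℝ) : Continuous (partitionZ (N := N) β) :=
  Complex.continuous_re.comp ((Matrix.continuous_exp.comp (continuous_const_smul _)).matrix_trace)

theorem continuousAt_gibbs {β : ℝ} {X : Matrix (Fin N) (Fin N) ℂ} (hX : partitionZ β X ≠ 0) :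
    ContinuousAt (gibbs β) X :=
  ((Complex.continuous_ofReal.comp (continuous_partitionZ β)).continuousAt.inv₀
    (Complex.ofReal_ne_zero.2 hX)).smul
    (Matrix.continuous_exp.comp (continuous_const_smul _)).continuousAt

theorem re_trace_gibbs_mul (β : ℝ) (X Y : Matrix (Fin N) (Fin N) ℂ) :
    (trace (gibbs β X * Y)).re = (trace (exp ((-β : ℂ) • X) * Y)).re / partitionZ β X := by
  rw [gibbs, Matrix.smul_mul, trace_smul, smul_eq_mul, ← Complex.ofReal_inv,
    Complex.re_ofReal_mul, inv_mul_eq_div]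

theorem neg_smul_interpolation (β s : ℝ) (A B : Matrix (Fin N) (Fin N) ℂ) :
    (-β : ℂ) • (((1 - s : ℝ) : ℂ) • A + (s : ℂ) • B)
      = (-β : ℂ) • A + (s : ℂ) • ((-β : ℂ) • (B - A)) := by
  push_cast
  module

theorem hasDerivAt_partitionZ_interpolation (β : ℝ) (A B : Matrix (Fin N) (Fin N) ℂ) (s : ℝ) :
    HasDerivAt (fun s : ℝ => partitionZ β (((1 - s : ℝ) : ℂ) • A + (s : ℂ) • B))
      (-β * (trace (exp ((-β : ℂ) • (((1 - s : ℝ) : ℂ) • A + (s : ℂ) • B)) * (B - A))).re) s := by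
  have h := (Matrix.hasDerivAt_trace_exp_add_smul ((-β : ℂ) • A) ((-β : ℂ) • (B - A)) s)
  simp only [partitionZ, neg_smul_interpolation]
  convert h.real_of_complex using 1
  rw [Matrix.mul_smul, trace_smul, smul_eq_mul, ← Complex.ofReal_neg, Complex.re_ofReal_mul]

theorem hasDerivAt_freeEnergy_interpolation {β : ℝ} (hβ : β ≠ 0) (A B : Matrix (Fin N) (Fin N) ℂ)
    {s : ℝ} (hZ : partitionZ β (((1 - s : ℝ) : ℂ) • A + (s : ℂ) • B) ≠ 0) :
    HasDerivAt (fun s : ℝ => freeEnergy β (((1 - s : ℝ) : ℂ) • A + (s : ℂ) • B))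
      (trace (gibbs β (((1 - s : ℝ) : ℂ) • A + (s : ℂ) • B) * (B - A))).re s := by
  refine (((hasDerivAt_partitionZ_interpolation β A B s).log hZ).const_mul (-β⁻¹)).congr_deriv ?_
  rw [re_trace_gibbs_mul]
  field_simp

end Thermodynamics

/-- **Thermodynamic integration identity.** For Hermitian `A`, `B` and `β > 0`,
`F_β(B) − F_β(A) = ∫₀¹ Tr(σ_β((1−s)A + sB)(B−A)) ds`, the integrand being a
real-valued continuous function of `s`. -/
theorem freeEnergy_thermodynamic_integration (N : ℕ)
    (A B : Matrix (Fin N) (Fin N) ℂ)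
    (hA : A.IsHermitian) (hB : B.IsHermitian) (β : ℝ) (hβ : 0 < β) :
    freeEnergy β B - freeEnergy β A
      = ∫ s in (0 : ℝ)..1,
          (Matrix.trace
            (gibbs β ((((1 - s : ℝ)) : ℂ) • A + ((s : ℝ) : ℂ) • B) * (B - A))).re ∧
      Continuous (fun s : ℝ =>
        (Matrix.trace
          (gibbs β ((((1 - s : ℝ)) : ℂ) • A + ((s : ℝ) : ℂ) • B) * (B - A))).re) := by
  rcases N.eq_zero_or_pos with rfl | hN
  · simp [Subsingleton.elim B A, continuous_const]
  have : NeZero N := ⟨hN.ne'⟩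
  have hZ (s : ℝ) : partitionZ β (((1 - s : ℝ) : ℂ) • A + (s : ℂ) • B) ≠ 0 :=
    (partitionZ_pos β ((hA.smul (Complex.conj_ofReal _)).add
      (hB.smul (Complex.conj_ofReal _)))).ne'
  have hcont : Continuous fun s : ℝ =>
      (trace (gibbs β (((1 - s : ℝ) : ℂ) • A + (s : ℂ) • B) * (B - A))).re :=
    Complex.continuous_re.comp <| Continuous.matrix_trace <| Continuous.mul
      (continuous_iff_continuousAt.2 fun s => (continuousAt_gibbs (hZ s)).comp
        (f := fun s : ℝ => ((1 - s : ℝ) : ℂ) • A + (s : ℂ) • B) (by fun_prop)) continuous_const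
  refine ⟨?_, hcont⟩
  rw [intervalIntegral.integral_eq_sub_of_hasDerivAt
    (fun s _ => hasDerivAt_freeEnergy_interpolation hβ.ne' A B (hZ s))
    (hcont.intervalIntegrable 0 1)]
  simp
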